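/- Let F = (W,R) be an m-transitive frame, 𝒜 a finite partition of W, and define u ≈ v iff (u ~_𝒜 v and u ~_R v), where ~_𝒜 identifies points in the same 𝒜-cell. Then the minimal filtration F/≈ is m-transitive, every cluster of F/≈ has at most |𝒜| elements, and the skeleton of F/≈ is isomorphic to the skeleton of F. -/
import Mathlib


/-- `relPow R i` is the `i`-fold composition of `R`, with `relPow R 0` the identity. -/
def relPow {W : Type*} (R : W → W → Prop) : ℕ → W → W → Prop
  | 0 => Eq
  | (i+1) => fun x z => ∃ y, relPow R i x y ∧ R y z

/-- The equivalence `x ~_R y ⟺ x R* y ∧ y R* x`. -/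
def simR {W : Type*} (R : W → W → Prop) (x y : W) : Prop :=
  Relation.ReflTransGen R x y ∧ Relation.ReflTransGen R y x

/-- The relation of the minimal filtration of `(W,R)` by the equivalence `E`. -/
def filtRel {W : Type*} (R E : W → W → Prop) (U V : Quot E) : Prop :=
  ∃ u v : W, Quot.mk E u = U ∧ Quot.mk E v = V ∧ R u v

/-- The skeleton of a frame `(W,R)`: the quotient by `~_R`. -/
def Skeleton (W : Type*) (R : W → W → Prop) := Quot (simR R)

/-- The skeleton order `[x] ≤ [y] ⟺ x R* y`. -/
def skelLe {W : Type*} (R : W → W → Prop) (a b : Skeleton W R) : Prop :=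
  ∃ x y : W, Quot.mk (simR R) x = a ∧ Quot.mk (simR R) y = b ∧ Relation.ReflTransGen R x y


section Aux
variable {W : Type*} {R E : W → W → Prop}

lemma simR_equivalence (R : W → W → Prop) : Equivalence (simR R) :=
  ⟨fun _ => ⟨.refl, .refl⟩, fun h => ⟨h.2, h.1⟩,
    fun h g => ⟨h.1.trans g.1, g.2.trans h.2⟩⟩

lemma quot_mk_eq_iff {r : W → W → Prop} (hr : Equivalence r) {a b : W} :
    Quot.mk r a = Quot.mk r b ↔ r a b := by
  rw [Quot.eq, hr.eqvGen_iff]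

lemma relPow_to_rtg {i : ℕ} {x y : W} (h : relPow R i x y) :
    Relation.ReflTransGen R x y := by
  induction i generalizing y with
  | zero => cases h; exact .refl
  | succ i ih => obtain ⟨z, hz, hR⟩ := h; exact (ih hz).tail hR

lemma relPow_fwd {i : ℕ} {x y : W} (h : relPow R i x y) :
    relPow (filtRel R E) i (Quot.mk E x) (Quot.mk E y) := by
  induction i generalizing y with
  | zero => cases h; rfl
  | succ i ih =>
      obtain ⟨z, hz, hR⟩ := h
      exact ⟨Quot.mk E z, ih hz, z, y, rfl, rfl, hR⟩

lemma filt_fwd {x y : W} (h : Relation.ReflTransGen R x y) :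
    Relation.ReflTransGen (filtRel R E) (Quot.mk E x) (Quot.mk E y) := by
  induction h with
  | refl => exact .refl
  | tail _ hR ih => exact ih.tail ⟨_, _, rfl, rfl, hR⟩

lemma filt_back (hE : Equivalence E) (hEsub : ∀ u v, E u v → simR R u v)
    {U V : Quot E} (h : Relation.ReflTransGen (filtRel R E) U V)
    {u v : W} (hu : Quot.mk E u = U) (hv : Quot.mk E v = V) :
    Relation.ReflTransGen R u v := by
  induction h generalizing v with
  | refl => exact (hEsub _ _ ((quot_mk_eq_iff hE).mp (hu.trans hv.symm))).1
  | tail _ hR ih =>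
      obtain ⟨a, b, ha, hb, hab⟩ := hR
      exact ((ih ha).tail hab).trans
        (hEsub _ _ ((quot_mk_eq_iff hE).mp (hb.trans hv.symm))).1

lemma skelLe_mk_iff {x y : W} :
    skelLe R (Quot.mk (simR R) x) (Quot.mk (simR R) y) ↔ Relation.ReflTransGen R x y := by
  constructor
  · rintro ⟨x', y', hx, hy, h⟩
    have hx' := (quot_mk_eq_iff (simR_equivalence R)).mp hx
    have hy' := (quot_mk_eq_iff (simR_equivalence R)).mp hy
    exact (hx'.2.trans h).trans hy'.1
  · intro h; exact ⟨x, y, rfl, rfl, h⟩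

end Aux

theorem mTransitive_filtration {W : Type*} (R : W → W → Prop) (m K : ℕ)
    -- `F` is `m`-transitive
    (hm : ∀ x y : W, Relation.ReflTransGen R x y ↔ ∃ i ≤ m, relPow R i x y)
    -- a finite partition of `W` into `K` cells, given by a surjective coloring
    (c : W → Fin K) (hc : Function.Surjective c) :
    -- `≈` is the intersection of the partition equivalence with `~_R`
    letI E : W → W → Prop := fun u v => c u = c v ∧ simR R u v
    -- the minimal filtration `F/≈` is `m`-transitive,
    (∀ U V : Quot E, Relation.ReflTransGen (filtRel R E) U V ↔
        ∃ i ≤ m, relPow (filtRel R E) i U V) ∧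
    -- every cluster of `F/≈` has at most `K = |𝒜|` elements,
    (∀ U : Quot E, ({V | simR (filtRel R E) U V}).Finite ∧
        ({V | simR (filtRel R E) U V}).ncard ≤ K) ∧
    -- and the skeletons of `F/≈` and `F` are isomorphic
    (∃ f : Skeleton W R → Skeleton (Quot E) (filtRel R E),
      Function.Bijective f ∧
      (∀ x : W, f (Quot.mk (simR R) x) = Quot.mk (simR (filtRel R E)) (Quot.mk E x)) ∧
      (∀ a b : Skeleton W R, skelLe R a b ↔ skelLe (filtRel R E) (f a) (f b))) := by

  set E : W → W → Prop := fun u v => c u = c v ∧ simR R u v with hEdef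
  have hEeq : Equivalence E :=
    ⟨fun x => ⟨rfl, (simR_equivalence R).refl x⟩,
     fun h => ⟨h.1.symm, (simR_equivalence R).symm h.2⟩,
     fun h g => ⟨h.1.trans g.1, (simR_equivalence R).trans h.2 g.2⟩⟩
  have hEsub : ∀ u v, E u v → simR R u v := fun _ _ h => h.2
  have key : ∀ (U V : Quot E),
      Relation.ReflTransGen (filtRel R E) U V ↔
        Relation.ReflTransGen R U.out V.out := by
    intro U V
    constructor
    · intro h; exact filt_back hEeq hEsub h (Quot.out_eq U) (Quot.out_eq V)
    · intro h
      have := filt_fwd (E := E) h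
      rwa [Quot.out_eq, Quot.out_eq] at this
  refine ⟨?_, ?_, ?_⟩
  · intro U V
    constructor
    · intro h
      obtain ⟨i, him, hi⟩ := (hm U.out V.out).mp ((key U V).mp h)
      refine ⟨i, him, ?_⟩
      have := relPow_fwd (E := E) hi
      rwa [Quot.out_eq, Quot.out_eq] at this
    · rintro ⟨i, _, hi⟩
      exact relPow_to_rtg hi
  · intro U
    have hinj : Set.InjOn (fun V : Quot E => c V.out) {V | simR (filtRel R E) U V} := by
      intro V hV V' hV' hcc
      simp only [Set.mem_setOf_eq] at hV hV'
      have h1 : simR R U.out V.out := ⟨(key U V).mp hV.1, (key V U).mp hV.2⟩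
      have h2 : simR R U.out V'.out := ⟨(key U V').mp hV'.1, (key V' U).mp hV'.2⟩
      have : E V.out V'.out :=
        ⟨hcc, (simR_equivalence R).trans ((simR_equivalence R).symm h1) h2⟩
      have := Quot.sound this
      rwa [Quot.out_eq, Quot.out_eq] at this
    have hfin : ({V | simR (filtRel R E) U V}).Finite :=
      Set.Finite.of_finite_image (Set.toFinite _) hinj
    refine ⟨hfin, ?_⟩
    calc ({V | simR (filtRel R E) U V}).ncard
        = ((fun V : Quot E => c V.out) '' {V | simR (filtRel R E) U V}).ncard :=
          (Set.ncard_image_of_injOn hinj).symm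
      _ ≤ (Set.univ : Set (Fin K)).ncard :=
          Set.ncard_le_ncard (Set.subset_univ _) Set.finite_univ
      _ = K := by simp [Set.ncard_univ]
  · refine ⟨Quot.lift (fun x => Quot.mk _ (Quot.mk E x))
      (fun a b h => Quot.sound ⟨filt_fwd h.1, filt_fwd h.2⟩), ⟨?_, ?_⟩, fun _ => rfl, ?_⟩
    · intro a b
      induction a using Quot.ind with | _ x => ?_
      induction b using Quot.ind with | _ y => ?_
      intro h
      have := (quot_mk_eq_iff (simR_equivalence (filtRel R E))).mp h
      exact Quot.sound ⟨filt_back hEeq hEsub this.1 rfl rfl,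
        filt_back hEeq hEsub this.2 rfl rfl⟩
    · intro b
      induction b using Quot.ind with | _ U => ?_
      exact ⟨Quot.mk _ U.out, congrArg _ (Quot.out_eq U)⟩
    · intro a b
      induction a using Quot.ind with | _ x => ?_
      induction b using Quot.ind with | _ y => ?_
      rw [skelLe_mk_iff]
      show _ ↔ skelLe _ (Quot.mk _ (Quot.mk E x)) (Quot.mk _ (Quot.mk E y))
      rw [skelLe_mk_iff]
      exact ⟨fun h => filt_fwd h, fun h => filt_back hEeq hEsub h rfl rfl⟩
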